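/- arXiv:1301.4541 — 3 statements merged into one kernel-verified Lean document; each statement's English description precedes it below -/
import Mathlib

section
/- Invariance of the rank-2 upper bound under mutation at a collinear pair: for k ≠ 0 and integers m₁ ≥ 1, m₂ ≥ 0, the substitution x₁' = x₁, x₂' = x₂/(1+x₁^k) maps the subalgebra ℚ[x₁'^{±1}, (1+x₁'^k)^{m₁−1}/x₂', x₂'(1+x₁'^k)^{m₂+1}] of ℚ(x₁,x₂) onto ℚ[x₁^{±1}, x₂(1+x₁^k)^{m₂}, (1+x₁^k)^{m₁}/x₂]; i.e. these two subalgebras of ℚ(x₁,x₂) are equal after the substitution. -/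
noncomputable abbrev K : Type := FractionRing (MvPolynomial (Fin 2) ℚ)
noncomputable abbrev x1 : K := algebraMap (MvPolynomial (Fin 2) ℚ) K (MvPolynomial.X 0)
noncomputable abbrev x2 : K := algebraMap (MvPolynomial (Fin 2) ℚ) K (MvPolynomial.X 1)

lemma pow_add_one_ne (n : ℕ) (hn : 0 < n) : (x1 : K) ^ n + 1 ≠ 0 := by
  intro h
  have hinj := IsFractionRing.injective (MvPolynomial (Fin 2) ℚ) K
  have h0 : (algebraMap (MvPolynomial (Fin 2) ℚ) K) (MvPolynomial.X 0 ^ n + 1) = 0 := by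
    rw [map_add, map_pow, map_one]; exact h
  have hp : (MvPolynomial.X (R := ℚ) (0 : Fin 2) ^ n + 1) = 0 := by
    apply hinj
    rw [h0, map_zero]
  have := congrArg (MvPolynomial.eval (fun _ => (0 : ℚ))) hp
  simp [zero_pow hn.ne'] at this

lemma x1_ne : (x1 : K) ≠ 0 := by
  intro h
  have hinj := IsFractionRing.injective (MvPolynomial (Fin 2) ℚ) K
  have : (MvPolynomial.X (R := ℚ) (0 : Fin 2)) = 0 := by
    apply hinj; rw [map_zero]; exact h
  exact MvPolynomial.X_ne_zero _ this

lemma x2_ne : (x2 : K) ≠ 0 := by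
  intro h
  have hinj := IsFractionRing.injective (MvPolynomial (Fin 2) ℚ) K
  have : (MvPolynomial.X (R := ℚ) (1 : Fin 2)) = 0 := by
    apply hinj; rw [map_zero]; exact h
  exact MvPolynomial.X_ne_zero _ this

lemma one_add_pow_ne (k : ℤ) (hk : k ≠ 0) : (1 : K) + x1 ^ k ≠ 0 := by
  rcases hk.lt_or_gt with h | h
  · have hn : 0 < k.natAbs := by omega
    have hkeq : k = -(k.natAbs : ℤ) := by omega
    have hz : (x1 : K) ^ k = ((x1 : K) ^ k.natAbs)⁻¹ := by
      rw [hkeq, zpow_neg, zpow_natCast]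
      simp
      congr 1
      rw [abs_of_neg h]
      omega
    rw [hz]
    intro hcon
    have hx0 : (x1 : K) ^ k.natAbs ≠ 0 := pow_ne_zero _ x1_ne
    have : (x1 : K) ^ k.natAbs * (1 + ((x1 : K) ^ k.natAbs)⁻¹) = x1 ^ k.natAbs + 1 := by
      field_simp
    rw [hcon, mul_zero] at this
    exact pow_add_one_ne k.natAbs hn this.symm
  · have hn : 0 < k.toNat := by omega
    have hz : (x1 : K) ^ k = (x1 : K) ^ k.toNat := by
      rw [← zpow_natCast, Int.toNat_of_nonneg h.le]
    rw [hz]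
    intro hcon
    exact pow_add_one_ne k.toNat hn (by linear_combination hcon)

/-- substituting x₁' = x₁, x₂' = x₂/(1+x₁^k) into the generators of
ℚ[x₁'^±, (1+x₁'^k)^(m₁−1)/x₂', x₂'(1+x₁'^k)^(m₂+1)] yields exactly the subalgebra
ℚ[x₁^±, x₂(1+x₁^k)^m₂, (1+x₁^k)^m₁/x₂] of ℚ(x₁,x₂). -/
theorem stmt_10 (k : ℤ) (hk : k ≠ 0) (m₁ m₂ : ℕ) (hm : 1 ≤ m₁) :
    Algebra.adjoin ℚ ({x1, x1⁻¹,
        (1 + x1 ^ k) ^ (m₁ - 1) / (x2 / (1 + x1 ^ k)),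
        (x2 / (1 + x1 ^ k)) * (1 + x1 ^ k) ^ (m₂ + 1)} : Set K)
      = Algebra.adjoin ℚ ({x1, x1⁻¹,
          x2 * (1 + x1 ^ k) ^ m₂, (1 + x1 ^ k) ^ m₁ / x2} : Set K) := by
  have hc : (1 : K) + x1 ^ k ≠ 0 := one_add_pow_ne k hk
  have e1 : (1 + x1 ^ k) ^ (m₁ - 1) / (x2 / (1 + x1 ^ k))
      = (1 + x1 ^ k) ^ m₁ / x2 := by
    rw [div_div_eq_mul_div, ← pow_succ, Nat.sub_add_cancel hm]
  have e2 : (x2 / (1 + x1 ^ k)) * (1 + x1 ^ k) ^ (m₂ + 1)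
      = x2 * (1 + x1 ^ k) ^ m₂ := by
    rw [pow_succ]
    field_simp
  rw [e1, e2]
  ext y
  constructor
  · intro hy
    refine Algebra.adjoin_mono ?_ hy
    intro z hz
    simp only [Set.mem_insert_iff, Set.mem_singleton_iff] at hz ⊢
    tauto
  · intro hy
    refine Algebra.adjoin_mono ?_ hy
    intro z hz
    simp only [Set.mem_insert_iff, Set.mem_singleton_iff] at hz ⊢
    tauto
end

section
/- For k ≥ 1, the subalgebras ℚ[x₁, x₂, (1+x₂^k)/x₁, (1+x₁^k)/x₂] and ℚ[x₁, x₂, (1+x₂^k)/x₁, (x₁^k + (1+x₂^k)^k)/(x₁^k x₂)] of the field ℚ(x₁, x₂) are equal. -/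
/-!
Writing `y₁ = (1 + x₂^k)/x₁`, `y₂ = (1 + x₁^k)/x₂` and `z = (x₁^k + (1 + x₂^k)^k)/(x₁^k x₂)`,
both `y₁^k y₂ - z` and `x₁^k z - y₂` equal `((1 + x₂^k)^k - 1)/x₂`, which is a polynomial in `x₂`
because `(1 + x₂^k)^k - 1` is divisible by `x₂^k`. Hence each of `y₂`, `z` lies in the algebra
generated by `x₁, x₂, y₁` and the other one.
-/

section Exchange

variable {R F : Type*} [CommRing R] [Field F] [Algebra R F]

theorem one_add_pow_pow_sub_one_div_mem {A : Subalgebra R F} {y : F} (hy : y ∈ A) (hy0 : y ≠ 0)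
    (k : ℕ) : ((1 + y ^ k) ^ k - 1) / y ∈ A := by
  rcases k with _ | n
  · simp
  · have h : ((1 + y ^ (n + 1)) ^ (n + 1) - 1) / y
        = y ^ n * ∑ i ∈ Finset.range (n + 1), (1 + y ^ (n + 1)) ^ i := by
      rw [div_eq_iff hy0, ← geom_sum_mul, add_sub_cancel_left]
      ring
    rw [h]
    exact mul_mem (pow_mem hy n) <|
      Subalgebra.sum_mem A fun i _ => pow_mem (add_mem (one_mem A) (pow_mem hy _)) i

theorem exchange_div_eq_pow_mul_sub {x y : F} (hx : x ≠ 0) (hy : y ≠ 0) (k : ℕ) :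
    (x ^ k + (1 + y ^ k) ^ k) / (x ^ k * y)
      = ((1 + y ^ k) / x) ^ k * ((1 + x ^ k) / y) - ((1 + y ^ k) ^ k - 1) / y := by
  rw [div_pow]
  field_simp
  ring

theorem one_add_pow_div_eq_pow_mul_sub {x y : F} (hx : x ≠ 0) (hy : y ≠ 0) (k : ℕ) :
    (1 + x ^ k) / y
      = x ^ k * ((x ^ k + (1 + y ^ k) ^ k) / (x ^ k * y)) - ((1 + y ^ k) ^ k - 1) / y := by
  field_simp
  ring

theorem adjoin_exchange_eq {x y : F} (hx : x ≠ 0) (hy : y ≠ 0) (k : ℕ) :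
    Algebra.adjoin R ({x, y, (1 + y ^ k) / x, (1 + x ^ k) / y} : Set F)
      = Algebra.adjoin R ({x, y, (1 + y ^ k) / x,
          (x ^ k + (1 + y ^ k) ^ k) / (x ^ k * y)} : Set F) := by
  apply le_antisymm <;>
    simp only [Algebra.adjoin_le_iff, Set.insert_subset_iff, Set.singleton_subset_iff]
  · have mem {a : F} (ha : a ∈ ({x, y, (1 + y ^ k) / x,
        (x ^ k + (1 + y ^ k) ^ k) / (x ^ k * y)} : Set F)) := Algebra.subset_adjoin (R := R) ha
    refine ⟨mem (by simp), mem (by simp), mem (by simp), ?_⟩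
    rw [one_add_pow_div_eq_pow_mul_sub hx hy]
    exact sub_mem (mul_mem (pow_mem (mem (by simp)) k) (mem (by simp)))
      (one_add_pow_pow_sub_one_div_mem (mem (by simp)) hy k)
  · have mem {a : F} (ha : a ∈ ({x, y, (1 + y ^ k) / x, (1 + x ^ k) / y} : Set F)) :=
      Algebra.subset_adjoin (R := R) ha
    refine ⟨mem (by simp), mem (by simp), mem (by simp), ?_⟩
    rw [exchange_div_eq_pow_mul_sub hx hy]
    exact sub_mem (mul_mem (pow_mem (mem (by simp)) k) (mem (by simp)))
      (one_add_pow_pow_sub_one_div_mem (mem (by simp)) hy k)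

end Exchange

theorem algebraMap_X_ne_zero (i : Fin 2) :
    algebraMap (MvPolynomial (Fin 2) ℚ) K (MvPolynomial.X i) ≠ 0 :=
  (map_ne_zero_iff _ (IsFractionRing.injective _ K)).mpr (MvPolynomial.X_ne_zero i)

theorem stmt_11_general (k : ℕ) :
    Algebra.adjoin ℚ ({x1, x2, (1 + x2 ^ k) / x1, (1 + x1 ^ k) / x2} : Set K)
      = Algebra.adjoin ℚ ({x1, x2, (1 + x2 ^ k) / x1,
          (x1 ^ k + (1 + x2 ^ k) ^ k) / (x1 ^ k * x2)} : Set K) :=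
  adjoin_exchange_eq (algebraMap_X_ne_zero 0) (algebraMap_X_ne_zero 1) k

/-- for k ≥ 1 the subalgebras ℚ[x₁, x₂, (1+x₂^k)/x₁, (1+x₁^k)/x₂] and
ℚ[x₁, x₂, (1+x₂^k)/x₁, (x₁^k + (1+x₂^k)^k)/(x₁^k x₂)] of ℚ(x₁,x₂) are equal. -/
theorem stmt_11 (k : ℕ) (hk : 1 ≤ k) :
    Algebra.adjoin ℚ ({x1, x2, (1 + x2 ^ k) / x1, (1 + x1 ^ k) / x2} : Set K)
      = Algebra.adjoin ℚ ({x1, x2, (1 + x2 ^ k) / x1,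
          (x1 ^ k + (1 + x2 ^ k) ^ k) / (x1 ^ k * x2)} : Set K) :=
  stmt_11_general k
end

section
/- For k ≥ 1 and m₂ ≥ 1, the subalgebras ℚ[x₁, x₂, (1+x₂^k)/x₁, (1+x₁^k)^{m₂}/x₂] and ℚ[x₁, x₂, (1+x₂^k)/x₁, (x₁^k + (1+x₂^k)^k)^{m₂}/(x₁^{m₂ k} x₂)] of ℚ(x₁,x₂) are equal. -/
/-!
Put `y = (1 + x₂^k)/x₁`. Then `x₁^k + (1 + x₂^k)^k = x₁^k (1 + y^k)`, so the last generator of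
the second algebra is `(1 + y^k)^m₂/x₂` and the claim is symmetric under `x₁ ↔ y`. As
`(x₁ y)^k = (1 + x₂^k)^k ≡ 1` modulo `x₂`, we get `1 + x₁^k ≡ x₁^k (1 + y^k)` modulo `x₂` in
`ℚ[x₁, x₂, y]`, and `a ≡ b` modulo `x₂` makes `a^m/x₂ - b^m/x₂ = ((a - b)/x₂) ∑ aⁱ bᵐ⁻¹⁻ⁱ` a
polynomial in `a`, `b`, `(a - b)/x₂`. Hence `(1 + x₁^k)^m₂/x₂` lies in the algebra generated by
`x₁, x₂, y` and `(1 + y^k)^m₂/x₂`, and vice versa.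
-/

open Finset

section Subring

variable {F S : Type*} [Field F] [SetLike S F] [SubringClass S F] {s : S}

theorem pow_div_mem_of_sub_eq_mul {a b c t : F} (ht : t ≠ 0) (ha : a ∈ s) (hb : b ∈ s)
    (hc : c ∈ s) (hab : a - b = t * c) (m : ℕ) (hbm : b ^ m / t ∈ s) : a ^ m / t ∈ s := by
  have key : a ^ m / t = b ^ m / t + c * ∑ i ∈ range m, a ^ i * b ^ (m - 1 - i) := by
    rw [div_add' _ _ _ ht, div_left_inj' ht]
    linear_combination
      (geom_sum₂_mul a b m).symm + (∑ i ∈ range m, a ^ i * b ^ (m - 1 - i)) * hab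
  rw [key]
  exact add_mem hbm (mul_mem hc (sum_mem fun i _ => mul_mem (pow_mem ha _) (pow_mem hb _)))

theorem exists_mem_one_add_pow_pow_sub_one_eq_mul {t : F} (ht : t ∈ s) {k : ℕ} (hk : k ≠ 0)
    (n : ℕ) : ∃ c ∈ s, (1 + t ^ k) ^ n - 1 = t * c := by
  obtain ⟨l, rfl⟩ := Nat.exists_eq_add_one_of_ne_zero hk
  refine ⟨t ^ l * ∑ i ∈ range n, (1 + t ^ (l + 1)) ^ i, mul_mem (pow_mem ht l)
    (sum_mem fun i _ => pow_mem (add_mem (one_mem s) (pow_mem ht _)) i), ?_⟩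
  linear_combination (geom_sum_mul (1 + t ^ (l + 1)) n).symm
    - (∑ i ∈ range n, (1 + t ^ (l + 1)) ^ i) * pow_succ' t l

theorem one_add_pow_pow_div_mem_of_mul_eq {p q t : F} (ht : t ≠ 0) (hp : p ∈ s) (hq : q ∈ s)
    (ht_mem : t ∈ s) {k : ℕ} (hk : k ≠ 0) (hpq : p * q = 1 + t ^ k) (m : ℕ)
    (hqm : (1 + q ^ k) ^ m / t ∈ s) : (1 + p ^ k) ^ m / t ∈ s := by
  have hpqk : p ^ k * q ^ k = (1 + t ^ k) ^ k := by rw [← mul_pow, hpq]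
  obtain ⟨c, hc, hc_eq⟩ := exists_mem_one_add_pow_pow_sub_one_eq_mul ht_mem hk k
  refine pow_div_mem_of_sub_eq_mul (b := p ^ k * (1 + q ^ k)) (c := -c) ht
    (add_mem (one_mem s) (pow_mem hp k))
    (mul_mem (pow_mem hp k) (add_mem (one_mem s) (pow_mem hq k)))
    (neg_mem hc) (by linear_combination -hpqk - hc_eq) m ?_
  rw [mul_pow, mul_div_assoc]
  exact mul_mem (pow_mem (pow_mem hp k) m) hqm

end Subring

theorem adjoin_eq_adjoin_mutation {R F : Type*} [CommRing R] [Field F] [Algebra R F]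
    {x₁ x₂ : F} (hx₁ : x₁ ≠ 0) (hx₂ : x₂ ≠ 0) {k : ℕ} (hk : k ≠ 0) (m : ℕ) :
    Algebra.adjoin R ({x₁, x₂, (1 + x₂ ^ k) / x₁, (1 + x₁ ^ k) ^ m / x₂} : Set F)
      = Algebra.adjoin R ({x₁, x₂, (1 + x₂ ^ k) / x₁,
          (x₁ ^ k + (1 + x₂ ^ k) ^ k) ^ m / (x₁ ^ (m * k) * x₂)} : Set F) := by
  set y := (1 + x₂ ^ k) / x₁
  have hxy : x₁ * y = 1 + x₂ ^ k := mul_div_cancel₀ _ hx₁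
  have hv : (x₁ ^ k + (1 + x₂ ^ k) ^ k) ^ m / (x₁ ^ (m * k) * x₂) = (1 + y ^ k) ^ m / x₂ := by
    rw [← hxy, mul_pow, ← mul_one_add, mul_pow, ← pow_mul',
      mul_div_mul_left _ _ (pow_ne_zero _ hx₁)]
  rw [hv]
  apply le_antisymm <;>
    simp only [Algebra.adjoin_le_iff, Set.insert_subset_iff, Set.singleton_subset_iff] <;>
    refine ⟨Algebra.subset_adjoin (by simp), Algebra.subset_adjoin (by simp),
      Algebra.subset_adjoin (by simp), ?_⟩
  · exact one_add_pow_pow_div_mem_of_mul_eq hx₂ (Algebra.subset_adjoin (by simp))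
      (Algebra.subset_adjoin (by simp)) (Algebra.subset_adjoin (by simp)) hk hxy m
      (Algebra.subset_adjoin (by simp))
  · exact one_add_pow_pow_div_mem_of_mul_eq hx₂ (Algebra.subset_adjoin (by simp))
      (Algebra.subset_adjoin (by simp)) (Algebra.subset_adjoin (by simp)) hk
      ((mul_comm _ _).trans hxy) m (Algebra.subset_adjoin (by simp))

theorem stmt_13_general (k m₂ : ℕ) (hk : 1 ≤ k) :
    Algebra.adjoin ℚ ({x1, x2, (1 + x2 ^ k) / x1, (1 + x1 ^ k) ^ m₂ / x2} : Set K)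
      = Algebra.adjoin ℚ ({x1, x2, (1 + x2 ^ k) / x1,
          (x1 ^ k + (1 + x2 ^ k) ^ k) ^ m₂ / (x1 ^ (m₂ * k) * x2)} : Set K) := by
  have hinj := IsFractionRing.injective (MvPolynomial (Fin 2) ℚ) K
  exact adjoin_eq_adjoin_mutation ((map_ne_zero_iff _ hinj).2 (MvPolynomial.X_ne_zero 0))
    ((map_ne_zero_iff _ hinj).2 (MvPolynomial.X_ne_zero 1)) (by omega) m₂

/-- for k ≥ 1 and m₂ ≥ 1 the subalgebras
ℚ[x₁, x₂, (1+x₂^k)/x₁, (1+x₁^k)^m₂/x₂] and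
ℚ[x₁, x₂, (1+x₂^k)/x₁, (x₁^k + (1+x₂^k)^k)^m₂/(x₁^{m₂k} x₂)] of ℚ(x₁,x₂) are equal. -/
theorem stmt_13 (k m₂ : ℕ) (hk : 1 ≤ k) (hm : 1 ≤ m₂) :
    Algebra.adjoin ℚ ({x1, x2, (1 + x2 ^ k) / x1, (1 + x1 ^ k) ^ m₂ / x2} : Set K)
      = Algebra.adjoin ℚ ({x1, x2, (1 + x2 ^ k) / x1,
          (x1 ^ k + (1 + x2 ^ k) ^ k) ^ m₂ / (x1 ^ (m₂ * k) * x2)} : Set K) :=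
  stmt_13_general k m₂ hk
end
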